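/- arXiv:2211.15392 — 2 statements merged into one kernel-verified Lean document; each statement's English description precedes it below -/
import Mathlib

section
/- Two pairs (x,y) and (x',y') in R^{(n)} \times R^{(m)} lie in the same orbit of Aut(R,<) if and only if they determine the same (n,m)-Delannoy path under the merge construction. -/
/-- The Delannoy path obtained by merging the coordinates of `x` and `y`:
scan the union of the coordinates in increasing order, recording `(1,0)` for a
coordinate appearing only in `x`, `(0,1)` for one appearing only in `y`, and
`(1,1)` for a common coordinate. -/
noncomputable def mergePath {n m : ℕ} (x : Fin n → ℝ) (y : Fin m → ℝ) : List (ℕ × ℕ) := by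
  classical
  exact ((Finset.image x Finset.univ ∪ Finset.image y Finset.univ).sort (· ≤ ·)).map
    fun t => ((if t ∈ Finset.image x Finset.univ then 1 else 0),
              (if t ∈ Finset.image y Finset.univ then 1 else 0))

/- ## Auxiliary: a piecewise-linear order automorphism of ℝ -/

noncomputable def lowBendFun (p q r : ℝ) : ℝ → ℝ :=
  fun t => if p ≤ t then t else p + (p - r) / (p - q) * (t - p)

theorem lowBend_strictMono {p q r : ℝ} (hq : q < p) (hr : r < p) :
    StrictMono (lowBendFun p q r) := by
  have hc : 0 < (p - r) / (p - q) := div_pos (by linarith) (by linarith)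
  intro a b hab
  unfold lowBendFun
  by_cases ha : p ≤ a
  · rw [if_pos ha, if_pos (ha.trans hab.le)]; exact hab
  · push_neg at ha
    rw [if_neg (not_le.mpr ha)]
    by_cases hb : p ≤ b
    · rw [if_pos hb]
      nlinarith
    · rw [if_neg hb]
      push_neg at hb
      nlinarith

theorem lowBend_surjective {p q r : ℝ} (hq : q < p) (hr : r < p) :
    Function.Surjective (lowBendFun p q r) := by
  have hc : 0 < (p - r) / (p - q) := div_pos (by linarith) (by linarith)
  intro s
  by_cases hs : p ≤ s
  · exact ⟨s, by simp [lowBendFun, hs]⟩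
  · push_neg at hs
    refine ⟨p + (s - p) / ((p - r) / (p - q)), ?_⟩
    have ht : ¬ p ≤ p + (s - p) / ((p - r) / (p - q)) := by
      push_neg
      have : (s - p) / ((p - r) / (p - q)) < 0 := div_neg_of_neg_of_pos (by linarith) hc
      linarith
    rw [lowBendFun, if_neg ht]
    rw [add_sub_cancel_left, mul_div_cancel₀ _ hc.ne']
    ring

noncomputable def lowBend (p q r : ℝ) (hq : q < p) (hr : r < p) : ℝ ≃o ℝ :=
  StrictMono.orderIsoOfSurjective _ (lowBend_strictMono hq hr) (lowBend_surjective hq hr)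

theorem lowBend_apply (p q r : ℝ) (hq : q < p) (hr : r < p) (t : ℝ) :
    lowBend p q r hq hr t = lowBendFun p q r t :=
  congrFun (StrictMono.coe_orderIsoOfSurjective _ _ _) t

theorem lowBend_fix {p q r : ℝ} (hq : q < p) (hr : r < p) {t : ℝ} (ht : p ≤ t) :
    lowBend p q r hq hr t = t := by
  rw [lowBend_apply, lowBendFun, if_pos ht]

theorem lowBend_map {p q r : ℝ} (hq : q < p) (hr : r < p) :
    lowBend p q r hq hr q = r := by
  have hc : (p - r) / (p - q) ≠ 0 := (div_pos (by linarith) (by linarith)).ne'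
  rw [lowBend_apply, lowBendFun, if_neg (not_le.mpr hq)]
  have hpq : p - q ≠ 0 := by intro h; apply hc; rw [h, div_zero]
  field_simp
  ring

/- ## Auxiliary: extending a finite order correspondence to an automorphism -/

theorem exists_orderIso_anchored : ∀ (k : ℕ) (a b : Fin k → ℝ), StrictMono a → StrictMono b →
    ∀ (p q : ℝ), (∀ i, p < a i) → (∀ i, q < b i) →
    ∃ g : ℝ ≃o ℝ, g p = q ∧ ∀ i, g (a i) = b i
  | 0, a, b, _, _, p, q, _, _ => ⟨OrderIso.addRight (q - p), by simp, fun i => i.elim0⟩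
  | k+1, a, b, ha, hb, p, q, hpa, hqb => by
    obtain ⟨g', hg'p, hg'⟩ := exists_orderIso_anchored k (a ∘ Fin.succ) (b ∘ Fin.succ)
      (ha.comp Fin.strictMono_succ) (hb.comp Fin.strictMono_succ) (a 0) (b 0)
      (fun i => ha (Fin.succ_pos i)) (fun i => hb (Fin.succ_pos i))
    have hgp : g' p < b 0 := by rw [← hg'p]; exact g'.strictMono (hpa 0)
    refine ⟨g'.trans (lowBend (b 0) (g' p) q hgp (hqb 0)), ?_, ?_⟩
    · exact lowBend_map hgp (hqb 0)
    · intro i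
      induction i using Fin.cases with
      | zero =>
        simp only [OrderIso.trans_apply, hg'p]
        exact lowBend_fix hgp (hqb 0) le_rfl
      | succ j =>
        have h1 : g' (a j.succ) = b j.succ := hg' j
        simp only [OrderIso.trans_apply, h1]
        exact lowBend_fix hgp (hqb 0) (hb.monotone (Fin.zero_le _))

theorem exists_orderIso_map {k : ℕ} (a b : Fin k → ℝ) (ha : StrictMono a) (hb : StrictMono b) :
    ∃ g : ℝ ≃o ℝ, ∀ i, g (a i) = b i := by
  cases k with
  | zero => exact ⟨OrderIso.refl ℝ, fun i => i.elim0⟩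
  | succ k =>
    obtain ⟨g, _, hg⟩ := exists_orderIso_anchored _ a b ha hb (a 0 - 1) (b 0 - 1)
      (fun i => lt_of_lt_of_le (by linarith) (ha.monotone (Fin.zero_le i)))
      (fun i => lt_of_lt_of_le (by linarith) (hb.monotone (Fin.zero_le i)))
    exact ⟨g, hg⟩

/- ## Auxiliary: sorted lists -/

theorem filter_map' {α β : Type*} (l : List α) (f : α → β) (p : β → Bool) :
    (l.map f).filter p = (l.filter (p ∘ f)).map f := List.filter_map

/-- the sort of the image of a strictly monotone tuple is `List.ofFn`. -/
theorem sort_image_eq_ofFn {k : ℕ} (a : Fin k → ℝ) (ha : StrictMono a) :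
    (Finset.image a Finset.univ).sort (· ≤ ·) = List.ofFn a := by
  have hnd : (List.ofFn a).Nodup := List.nodup_ofFn.mpr ha.injective
  have htf : (List.ofFn a).toFinset = Finset.image a Finset.univ := by
    ext t
    simp [List.mem_ofFn, Set.mem_range]
  rw [← htf]
  exact (List.toFinset_sort _ hnd).mpr (List.sortedLE_ofFn_iff.mpr ha.monotone).pairwise

/-- a strictly sorted list with given elements is the sort of the finset. -/
theorem sort_eq_of_sorted {l : List ℝ} (hl : l.Pairwise (· < ·)) (A : Finset ℝ)
    (hA : ∀ t, t ∈ l ↔ t ∈ A) : A.sort (· ≤ ·) = l := by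
  have hnd : l.Nodup := hl.nodup
  have : l.toFinset = A := by ext t; simp [← hA t]
  rw [← this]
  exact (List.toFinset_sort _ hnd).mpr (hl.imp fun h => h.le)

theorem iff_of_ite_eq {P Q : Prop} [Decidable P] [Decidable Q]
    (h : (if P then 1 else 0 : ℕ) = if Q then 1 else 0) : P ↔ Q := by
  split_ifs at h with h1 h2 <;> simp_all

theorem mergePath_def {n m : ℕ} (x : Fin n → ℝ) (y : Fin m → ℝ) :
    mergePath x y = ((Finset.image x Finset.univ ∪ Finset.image y Finset.univ).sort (· ≤ ·)).map
      fun t => (((if t ∈ Finset.image x Finset.univ then 1 else 0) : ℕ),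
                ((if t ∈ Finset.image y Finset.univ then 1 else 0) : ℕ)) := by
  unfold mergePath
  congr

/-- Two pairs of increasing tuples lie in the same orbit of `Aut(ℝ,<)` (acting diagonally)
if and only if they determine the same Delannoy path under the merge construction. -/
theorem same_orbit_iff_same_path {n m : ℕ} (x x' : Fin n → ℝ) (y y' : Fin m → ℝ)
    (hx : StrictMono x) (hx' : StrictMono x') (hy : StrictMono y) (hy' : StrictMono y') :
    (∃ g : ℝ ≃o ℝ, (∀ i, g (x i) = x' i) ∧ (∀ j, g (y j) = y' j)) ↔
      mergePath x y = mergePath x' y' := by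
  classical
  set Ax := Finset.image x Finset.univ with hAxdef
  set Ay := Finset.image y Finset.univ with hAydef
  set Ax' := Finset.image x' Finset.univ with hAx'def
  set Ay' := Finset.image y' Finset.univ with hAy'def
  set s : List ℝ := (Ax ∪ Ay).sort (· ≤ ·) with hsdef
  set s' : List ℝ := (Ax' ∪ Ay').sort (· ≤ ·) with hs'def
  have hss : s.Pairwise (· < ·) := (Finset.sortedLT_sort _).pairwise
  have hss' : s'.Pairwise (· < ·) := (Finset.sortedLT_sort _).pairwise
  constructor
  · rintro ⟨g, hgx, hgy⟩
    have hgx' : x' = g ∘ x := by funext i; exact (hgx i).symm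
    have hgy' : y' = g ∘ y := by funext j; exact (hgy j).symm
    have hAx' : Ax' = Ax.image g := by
      rw [hAx'def, hgx', hAxdef, Finset.image_image]
    have hAy' : Ay' = Ay.image g := by
      rw [hAy'def, hgy', hAydef, Finset.image_image]
    have hmem : ∀ t : ℝ, (g t ∈ Ax' ↔ t ∈ Ax) ∧ (g t ∈ Ay' ↔ t ∈ Ay) := by
      intro t
      rw [hAx', hAy']
      exact ⟨g.injective.mem_finset_image, g.injective.mem_finset_image⟩
    have hs' : s' = s.map g := by
      rw [hs'def]
      refine sort_eq_of_sorted (List.Pairwise.map g (fun a b hab => g.strictMono hab) hss) _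
        fun t => ?_
      simp only [List.mem_map, Finset.mem_union, hsdef, Finset.mem_sort]
      constructor
      · rintro ⟨u, hu, rfl⟩
        rcases hu with hu | hu
        · exact Or.inl ((hmem u).1.mpr hu)
        · exact Or.inr ((hmem u).2.mpr hu)
      · rintro (ht | ht)
        · rw [hAx'] at ht
          obtain ⟨u, hu, rfl⟩ := Finset.mem_image.mp ht
          exact ⟨u, Or.inl hu, rfl⟩
        · rw [hAy'] at ht
          obtain ⟨u, hu, rfl⟩ := Finset.mem_image.mp ht
          exact ⟨u, Or.inr hu, rfl⟩
    rw [mergePath_def, mergePath_def, ← hsdef, ← hs'def, ← hAxdef, ← hAydef, ← hAx'def,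
      ← hAy'def, hs', List.map_map]
    refine List.map_congr_left fun t _ => ?_
    simp only [Function.comp_apply]
    rw [if_congr ((hmem t).1) rfl rfl, if_congr ((hmem t).2) rfl rfl]
  · intro h
    rw [mergePath_def, mergePath_def, ← hsdef, ← hs'def, ← hAxdef, ← hAydef, ← hAx'def,
      ← hAy'def] at h
    have hlen : s.length = s'.length := by
      have := congrArg List.length h
      simpa using this
    have hbm : StrictMono (fun i : Fin s.length => s'.get (Fin.cast hlen i)) :=
      fun i j hij => hss'.sortedLT.strictMono_get (by simpa using hij)
    obtain ⟨g, hg⟩ := exists_orderIso_map s.get _ hss.sortedLT.strictMono_get hbm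
    -- indicator equalities at each index
    have hind : ∀ i : Fin s.length,
        (s.get i ∈ Ax ↔ s'.get (Fin.cast hlen i) ∈ Ax') ∧
        (s.get i ∈ Ay ↔ s'.get (Fin.cast hlen i) ∈ Ay') := by
      intro i
      have hi : (i : ℕ) < s.length := i.isLt
      have hi' : (i : ℕ) < s'.length := hlen ▸ i.isLt
      have h1 : (s.map (fun t => (((if t ∈ Ax then 1 else 0) : ℕ),
            ((if t ∈ Ay then 1 else 0) : ℕ))))[(i : ℕ)]'(by simpa using hi) =
          (s'.map (fun t => (((if t ∈ Ax' then 1 else 0) : ℕ),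
            ((if t ∈ Ay' then 1 else 0) : ℕ))))[(i : ℕ)]'(by simpa using hi') :=
        List.getElem_of_eq h _
      rw [List.getElem_map, List.getElem_map] at h1
      have h3 := congrArg Prod.fst h1
      have h4 := congrArg Prod.snd h1
      simp only at h3 h4
      exact ⟨iff_of_ite_eq h3, iff_of_ite_eq h4⟩
    have hmaps : s' = s.map g := by
      refine List.ext_getElem (by simpa using hlen.symm) fun i h1 h2 => ?_
      have h2' : i < s.length := by simpa using h2
      rw [List.getElem_map]
      exact (hg ⟨i, h2'⟩).symm
    have hmem : ∀ t ∈ s, (t ∈ Ax ↔ g t ∈ Ax') ∧ (t ∈ Ay ↔ g t ∈ Ay') := by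
      intro t ht
      obtain ⟨i, rfl⟩ := List.mem_iff_get.mp ht
      rw [hg i]
      exact hind i
    -- filtered lists
    have hfx : s.filter (· ∈ Ax) = List.ofFn x := by
      rw [← sort_image_eq_ofFn x hx, ← hAxdef]
      refine (sort_eq_of_sorted (List.Pairwise.filter _ hss) _ fun t => ?_).symm
      simp only [List.mem_filter, decide_eq_true_eq, hsdef, Finset.mem_sort, Finset.mem_union]
      constructor
      · exact fun h => h.2
      · exact fun h => ⟨Or.inl h, h⟩
    have hfy : s.filter (· ∈ Ay) = List.ofFn y := by
      rw [← sort_image_eq_ofFn y hy, ← hAydef]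
      refine (sort_eq_of_sorted (List.Pairwise.filter _ hss) _ fun t => ?_).symm
      simp only [List.mem_filter, decide_eq_true_eq, hsdef, Finset.mem_sort, Finset.mem_union]
      constructor
      · exact fun h => h.2
      · exact fun h => ⟨Or.inr h, h⟩
    have hfx' : s'.filter (· ∈ Ax') = List.ofFn x' := by
      rw [← sort_image_eq_ofFn x' hx', ← hAx'def]
      refine (sort_eq_of_sorted (List.Pairwise.filter _ hss') _ fun t => ?_).symm
      simp only [List.mem_filter, decide_eq_true_eq, hs'def, Finset.mem_sort, Finset.mem_union]
      constructor
      · exact fun h => h.2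
      · exact fun h => ⟨Or.inl h, h⟩
    have hfy' : s'.filter (· ∈ Ay') = List.ofFn y' := by
      rw [← sort_image_eq_ofFn y' hy', ← hAy'def]
      refine (sort_eq_of_sorted (List.Pairwise.filter _ hss') _ fun t => ?_).symm
      simp only [List.mem_filter, decide_eq_true_eq, hs'def, Finset.mem_sort, Finset.mem_union]
      constructor
      · exact fun h => h.2
      · exact fun h => ⟨Or.inr h, h⟩
    refine ⟨g, ?_, ?_⟩
    · have : List.ofFn x' = (List.ofFn x).map g := by
        rw [← hfx', hmaps, filter_map', ← hfx]
        congr 1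
        refine List.filter_congr fun t ht => ?_
        simp only [Function.comp_apply, decide_eq_decide]
        exact ((hmem t ht).1).symm
      rw [List.map_ofFn] at this
      intro i
      exact (congrFun (List.ofFn_inj.mp this) i).symm
    · have : List.ofFn y' = (List.ofFn y).map g := by
        rw [← hfy', hmaps, filter_map', ← hfy]
        congr 1
        refine List.filter_congr fun t ht => ?_
        simp only [Function.comp_apply, decide_eq_decide]
        exact ((hmem t ht).2).symm
      rw [List.map_ofFn] at this
      intro i
      exact (congrFun (List.ofFn_inj.mp this) i).symm
end

section
/- With K the free Z-module on words in {\bullet,\circ} and res as defined (split between letters plus split by deleting one letter), the map res is coassociative: (res \otimes id) \circ res = (id \otimes res) \circ res. -/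
/-- A weight: a word in the two-letter alphabet `{•, ∘}` (encoded as `Bool`,
with `true = •` and `false = ∘`). -/
abbrev Word : Type := List Bool

/-- The Grothendieck group `K`: the free `ℤ`-module on the set of weights,
with basis `a_λ = Finsupp.single λ 1`. -/
abbrev K : Type := Word →₀ ℤ

/-- The model of `K ⊗ K`: the free `ℤ`-module on pairs of weights, with
`a_λ ⊗ a_μ = Finsupp.single (λ, μ) 1`. -/
abbrev K2 : Type := Word × Word →₀ ℤ

/-- `res` on a basis element: `res(a_λ) = ∑_{i=0}^n a_{λ[1,i]} ⊗ a_{λ(i,n]}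
+ ∑_{i=1}^n a_{λ[1,i)} ⊗ a_{λ(i,n]}` where `n = ℓ(λ)`. -/
noncomputable def resWord (w : Word) : K2 :=
  (∑ i ∈ Finset.range (w.length + 1), Finsupp.single (w.take i, w.drop i) 1)
    + ∑ i ∈ Finset.range w.length, Finsupp.single (w.take i, w.drop (i + 1)) 1

/-- The restriction comultiplication `res : K → K ⊗ K`. -/
noncomputable def res : K →ₗ[ℤ] K2 :=
  Finsupp.lift K2 ℤ Word resWord

/-- The model of `K ⊗ K ⊗ K`: the free `ℤ`-module on triples of weights. -/
abbrev K3 : Type := Word × Word × Word →₀ ℤ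

/-- `res ⊗ id : K ⊗ K → K ⊗ K ⊗ K`. -/
noncomputable def resLeft : K2 →ₗ[ℤ] K3 :=
  Finsupp.lift K3 ℤ (Word × Word) fun p =>
    (resWord p.1).sum fun q c => c • Finsupp.single (q.1, q.2, p.2) 1

/-- `id ⊗ res : K ⊗ K → K ⊗ K ⊗ K`. -/
noncomputable def resRight : K2 →ₗ[ℤ] K3 :=
  Finsupp.lift K3 ℤ (Word × Word) fun p =>
    (resWord p.2).sum fun q c => c • Finsupp.single (p.1, q.1, q.2) 1

/-!
Removing the first letter `x` of `x :: w` gives the recursion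
`res(a_{x w}) = a_∅ ⊗ a_{x w} + a_∅ ⊗ a_w + (x·) ⊗ id (res a_w)`.
Prepending `x` to the first factor commutes with `id ⊗ res`, and with `res ⊗ id` up to terms
`a_∅ ⊗ -`. Applying both sides of coassociativity to this recursion, all `a_∅ ⊗ -` terms agree,
so coassociativity on basis elements follows by induction on the word.
-/

open Finsupp Finset

def consFst (x : Bool) (p : Word × Word) : Word × Word := (x :: p.1, p.2)

def consFst3 (x : Bool) (t : Word × Word × Word) : Word × Word × Word := (x :: t.1, t.2)

theorem res_single (w : Word) : res (single w 1) = resWord w := by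
  simp [res]

theorem resWord_nil : resWord [] = single ([], []) 1 := by
  simp [resWord]

theorem resWord_cons (x : Bool) (w : Word) :
    resWord (x :: w) =
      single ([], x :: w) 1 + single ([], w) 1 + (resWord w).mapDomain (consFst x) := by
  simp only [resWord, List.length_cons, sum_range_succ' _ (w.length + 1),
    sum_range_succ' _ w.length, mapDomain_add, mapDomain_finsetSum, mapDomain_single,
    List.take_succ_cons, List.drop_succ_cons, List.take_zero, List.drop_zero, consFst]
  abel

theorem resLeft_single (u v : Word) :
    resLeft (single (u, v) 1) = (resWord u).mapDomain fun q => (q.1, q.2, v) := by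
  simp [resLeft, mapDomain]

theorem resRight_single (u v : Word) :
    resRight (single (u, v) 1) = (resWord v).mapDomain (Prod.mk u) := by
  simp [resRight, mapDomain]

theorem resLeft_mapDomain_consFst (x : Bool) (D : K2) :
    resLeft (D.mapDomain (consFst x)) =
      (D.mapDomain (consFst x) + D).mapDomain (Prod.mk []) +
        (resLeft D).mapDomain (consFst3 x) := by
  induction D using Finsupp.induction_linear with
  | zero => simp
  | add D E hD hE => simp only [mapDomain_add, map_add, hD, hE]; abel
  | single p c =>
    rw [← smul_single_one]
    simp only [mapDomain_smul, map_smul, mapDomain_single, ← smul_add]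
    congr 1
    obtain ⟨u, v⟩ := p
    simp only [consFst, resLeft_single, resWord_cons, mapDomain_add, mapDomain_single,
      ← mapDomain_comp]
    rfl

theorem resRight_mapDomain_consFst (x : Bool) (D : K2) :
    resRight (D.mapDomain (consFst x)) = (resRight D).mapDomain (consFst3 x) := by
  induction D using Finsupp.induction_linear with
  | zero => simp
  | add D E hD hE => simp only [mapDomain_add, map_add, hD, hE]
  | single p c =>
    rw [← smul_single_one]
    simp only [mapDomain_smul, map_smul, mapDomain_single]
    congr 1
    obtain ⟨u, v⟩ := p
    simp only [consFst, resRight_single, ← mapDomain_comp]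
    rfl

theorem resLeft_resWord_eq_resRight_resWord (w : Word) :
    resLeft (resWord w) = resRight (resWord w) := by
  induction w with
  | nil => simp [resWord_nil, resLeft_single, resRight_single]
  | cons x w ih =>
    simp only [resWord_cons, map_add, resLeft_single, resRight_single, resLeft_mapDomain_consFst,
      resRight_mapDomain_consFst, ih, resWord_nil, mapDomain_add, mapDomain_single]
    abel

/-- The comultiplication `res` is coassociative:
`(res ⊗ id) ∘ res = (id ⊗ res) ∘ res`. -/
theorem res_coassoc : ∀ x : K, resLeft (res x) = resRight (res x) := by
  suffices resLeft ∘ₗ res = resRight ∘ₗ res from fun x => LinearMap.congr_fun this x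
  refine Finsupp.lhom_ext' fun w => LinearMap.ext_ring ?_
  simpa [res_single] using resLeft_resWord_eq_resRight_resWord w
end
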